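/- For a connected matrix-weighted network whose negation (replacing each W_{ij} by −W_{ij}) is coherent while the network itself is coherent as well, the underlying graph is bipartite. Equivalently: if both 1 and −1 are eigenvalues of the supra-transition matrix 𝒫 of a connected matrix-weighted network, then the underlying magnitude graph is bipartite. -/

import Mathlib

open Matrix Kronecker Filter

variable {n nd m : ℕ}

/-- Supra-weight matrix: block matrix with (i,j)-block `W i j`. -/
def supra (W : Fin n → Fin n → Matrix (Fin nd) (Fin nd) ℝ) :
    Matrix (Fin n × Fin nd) (Fin n × Fin nd) ℝ :=
  fun p q => W p.1 q.1 p.2 q.2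

/-- Supra-Laplacian `ℒ = (D ⊗ I) − 𝒲`, built from edge magnitudes `w` and
edge transformations `R` (so `W i j = w i j • R i j`). -/
noncomputable def supraLap (w : Fin n → Fin n → ℝ)
    (R : Fin n → Fin n → Matrix (Fin nd) (Fin nd) ℝ) :
    Matrix (Fin n × Fin nd) (Fin n × Fin nd) ℝ :=
  (Matrix.diagonal (fun i => ∑ j, w i j)) ⊗ₖ (1 : Matrix (Fin nd) (Fin nd) ℝ)
    - supra (fun i j => w i j • R i j)

/-- Supra-transition matrix `𝒫 = 𝒟⁻¹𝒲`. -/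
noncomputable def supraP (w : Fin n → Fin n → ℝ)
    (R : Fin n → Fin n → Matrix (Fin nd) (Fin nd) ℝ) :
    Matrix (Fin n × Fin nd) (Fin n × Fin nd) ℝ :=
  fun p q => w p.1 q.1 * R p.1 q.1 p.2 q.2 / (∑ k, w p.1 k)

/-- Transformation of a directed path, given as its list of visited nodes:
the ordered product of the edge transformations. -/
def pathTransform (R : Fin n → Fin n → Matrix (Fin nd) (Fin nd) ℝ) :
    List (Fin n) → Matrix (Fin nd) (Fin nd) ℝ
  | [] => 1
  | [_] => 1
  | i :: j :: rest => R i j * pathTransform R (j :: rest)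

/-- `p` is a directed path from `i` to `j` along edges of the relation `E`. -/
def IsPathFrom (E : Fin n → Fin n → Prop) (i j : Fin n) (p : List (Fin n)) : Prop :=
  p.Chain' E ∧ p.head? = some i ∧ p.getLast? = some j

/-- Coherence: the transformation of every directed cycle is the identity. -/
def Coherent (E : Fin n → Fin n → Prop)
    (R : Fin n → Fin n → Matrix (Fin nd) (Fin nd) ℝ) : Prop :=
  ∀ i (p : List (Fin n)), IsPathFrom E i i p → pathTransform R p = 1

/-- Connectivity: any two nodes are joined by a directed path. -/
def Connected (E : Fin n → Fin n → Prop) : Prop :=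
  ∀ i j, ∃ p, IsPathFrom E i j p

/-- The block-diagonal matrix `𝒮` whose `i`-th diagonal block is `S b0 (σ i)`. -/
def blockS (σ : Fin n → Fin m) (S : Fin m → Fin m → Matrix (Fin nd) (Fin nd) ℝ)
    (b0 : Fin m) : Matrix (Fin n × Fin nd) (Fin n × Fin nd) ℝ :=
  fun p q => if p.1 = q.1 then S b0 (σ p.1) p.2 q.2 else 0

/-!
A closed path has the same transformation `T` under `R` and, up to the sign `(-1)^(edges)`, under
`-R`; if both networks are coherent then `T = 1 = ±1`, so every closed path has an even number of
edges. Colouring each node by the parity of the length of a fixed path to it from a base node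
is then a proper 2-colouring: an edge `i ~ j` closes a cycle through the paths to `i` and `j`,
whose lengths must therefore have different parities.
-/

lemma pathTransform_neg (R : Fin n → Fin n → Matrix (Fin nd) (Fin nd) ℝ) :
    ∀ p : List (Fin n),
      pathTransform (fun i j => -(R i j)) p = (-1 : ℝ) ^ (p.length - 1) • pathTransform R p
  | [] => by simp [pathTransform]
  | [_] => by simp [pathTransform]
  | i :: j :: rest => by
      simp only [pathTransform, pathTransform_neg R (j :: rest), List.length_cons,
        Nat.add_sub_cancel, pow_succ, neg_mul, Matrix.mul_smul, mul_neg_one, neg_smul]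

namespace IsPathFrom

variable {E : Fin n → Fin n → Prop} {i j k : Fin n} {p q : List (Fin n)}

lemma ne_nil (hp : IsPathFrom E i j p) : p ≠ [] := by
  rintro rfl
  simp [IsPathFrom] at hp

lemma append_tail (hp : IsPathFrom E i j p) (hq : IsPathFrom E j k q) :
    IsPathFrom E i k (p ++ q.tail) := by
  obtain ⟨hpc, hph, hpl⟩ := hp
  obtain ⟨hqc, hqh, hql⟩ := hq
  obtain ⟨t, rfl⟩ : ∃ t, q = j :: t := by
    cases q with
    | nil => simp at hqh
    | cons a t => exact ⟨t, by simpa using hqh⟩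
  have hpne : p ≠ [] := by rintro rfl; simp at hph
  refine ⟨hpc.append hqc.tail ?_, by simp [List.head?_append, hph], ?_⟩
  · intro x hx y hy
    rw [hpl, Option.mem_some_iff] at hx
    cases t with
    | nil => simp at hy
    | cons b t =>
      rw [List.tail_cons, List.head?_cons, Option.mem_some_iff] at hy
      subst hx hy
      exact (List.isChain_cons_cons.1 hqc).1
  · cases t with
    | nil => simpa [hpl] using hql
    | cons b t => simpa [List.getLast?_append, List.getLast?_cons_cons] using hql

lemma reverse (hE : ∀ {a b}, E a b → E b a) (hp : IsPathFrom E i j p) :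
    IsPathFrom E j i p.reverse := by
  obtain ⟨hpc, hph, hpl⟩ := hp
  refine ⟨?_, by rwa [List.head?_reverse], by rwa [List.getLast?_reverse]⟩
  exact List.isChain_reverse.2 (hpc.imp fun _ _ h => hE h)

lemma of_adj (h : E i j) : IsPathFrom E i j [i, j] :=
  ⟨List.isChain_pair.2 h, rfl, rfl⟩

end IsPathFrom

lemma odd_length_of_coherent_of_coherent_neg [NeZero nd] {E : Fin n → Fin n → Prop}
    {R : Fin n → Fin n → Matrix (Fin nd) (Fin nd) ℝ}
    (hcoh : Coherent E R) (hcohneg : Coherent E (fun i j => -(R i j)))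
    {i : Fin n} {p : List (Fin n)} (hp : IsPathFrom E i i p) : Odd p.length := by
  have hsign := hcohneg i p hp
  rw [pathTransform_neg, hcoh i p hp] at hsign
  have hsign₀₀ := congrFun (congrFun hsign 0) 0
  simp only [Matrix.smul_apply, Matrix.one_apply_eq, smul_eq_mul, mul_one] at hsign₀₀
  have heven : Even (p.length - 1) :=
    (neg_one_pow_eq_one_iff_even (by norm_num : (-1 : ℝ) ≠ 1)).1 hsign₀₀
  have hpos : 0 < p.length := List.length_pos_iff.2 hp.ne_nil
  obtain ⟨k, hk⟩ := heven
  exact ⟨k, by omega⟩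

theorem stmt19_general [NeZero nd] (w : Fin n → Fin n → ℝ)
    (R : Fin n → Fin n → Matrix (Fin nd) (Fin nd) ℝ)
    (hw_symm : ∀ i j, w i j = w j i)
    (hconn : Connected (fun i j => w i j ≠ 0))
    (hcoh : Coherent (fun i j => w i j ≠ 0) R)
    (hcohneg : Coherent (fun i j => w i j ≠ 0) (fun i j => -(R i j))) :
    ∃ f : Fin n → Bool, ∀ i j, w i j ≠ 0 → f i ≠ f j := by
  rcases isEmpty_or_nonempty (Fin n) with hempty | ⟨⟨v₀⟩⟩
  · exact ⟨fun _ => true, fun i => isEmptyElim i⟩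
  choose path hpath using hconn v₀
  refine ⟨fun i => decide (Even (path i).length), fun i j hij => ?_⟩
  have hcycle := ((hpath i).append_tail (.of_adj hij)).append_tail
    ((hpath j).reverse fun h => by rwa [hw_symm])
  have hodd := odd_length_of_coherent_of_coherent_neg hcoh hcohneg hcycle
  have hpos : 0 < (path j).length := List.length_pos_iff.2 (hpath j).ne_nil
  have hlen : (path i ++ [j] ++ (path j).reverse.tail).length
      = (path i).length + (path j).length := by
    simp only [List.length_append, List.length_tail, List.length_reverse, List.length_singleton]
    omega
  rw [List.tail_cons, hlen, Nat.odd_add'] at hodd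
  simp [← Nat.not_odd_iff_even, hodd]

/-- if a connected matrix-weighted network is coherent and its
negation (every `W_{ij}` replaced by `−W_{ij}`) is also coherent, then the
underlying magnitude graph is bipartite. -/
theorem stmt19 [NeZero nd] (w : Fin n → Fin n → ℝ)
    (R : Fin n → Fin n → Matrix (Fin nd) (Fin nd) ℝ)
    (hw_symm : ∀ i j, w i j = w j i)
    (hrec : ∀ i j, R i j = (R j i)ᵀ)
    (hconn : Connected (fun i j => w i j ≠ 0))
    (hcoh : Coherent (fun i j => w i j ≠ 0) R)
    (hcohneg : Coherent (fun i j => w i j ≠ 0) (fun i j => -(R i j))) :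
    ∃ f : Fin n → Bool, ∀ i j, w i j ≠ 0 → f i ≠ f j :=
  stmt19_general w R hw_symm hconn hcoh hcohneg
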